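/- Let G = (V, E) be a finite simple graph and let v₁, …, v_l (l ≥ 2, vertices pairwise distinct, v_i adjacent to v_{i+1} for all i) be a path in G such that every inner vertex v₂, …, v_{l−1} has degree exactly 2 in G. Let W ⊆ V induce a connected subgraph of G with v₁ ∈ W and v_l ∈ W. Then there exist integers j, j' ≥ 1 with j + j' ≤ l such that W ∩ {v₁, …, v_l} = {v₁, …, v_j} ∪ {v_{l−j'+1}, …, v_l} (in particular, W contains all of v₁, …, v_l when j + j' = l). -/
import Mathlib


theorem stmt9 {V : Type*} [Fintype V] [DecidableEq V]
    (G : SimpleGraph V) [DecidableRel G.Adj]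
    (l : ℕ) (hl : 2 ≤ l) (v : Fin l → V)
    (hinj : Function.Injective v)
    (hpath : ∀ (i : ℕ) (h : i + 1 < l), G.Adj (v ⟨i, by omega⟩) (v ⟨i + 1, h⟩))
    (hdeg : ∀ (i : ℕ) (h : i < l), 0 < i → i + 1 < l → G.degree (v ⟨i, h⟩) = 2)
    (W : Set V) (hconn : (G.induce W).Connected)
    (h0 : v ⟨0, by omega⟩ ∈ W) (hlast : v ⟨l - 1, by omega⟩ ∈ W) :
    ∃ j j' : ℕ, 1 ≤ j ∧ 1 ≤ j' ∧ j + j' ≤ l ∧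
      W ∩ Set.range v = v '' {i : Fin l | (i : ℕ) < j ∨ l - j' ≤ (i : ℕ)} := by
  classical
  have hl0 : 0 < l := by omega
  -- neighbors of an inner vertex are exactly the previous and next path vertices
  have hnbr : ∀ (a : ℕ) (h1 : 0 < a) (h2 : a + 1 < l) (u : V),
      G.Adj (v ⟨a, by omega⟩) u → u = v ⟨a - 1, by omega⟩ ∨ u = v ⟨a + 1, h2⟩ := by
    intro a h1 h2 u hadj
    have hw1 : G.Adj (v ⟨a, by omega⟩) (v ⟨a - 1, by omega⟩) := by
      have h' := hpath (a - 1) (by omega)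
      have ha : (⟨a - 1 + 1, by omega⟩ : Fin l) = ⟨a, by omega⟩ := by
        apply Fin.ext; simp; omega
      rw [ha] at h'
      exact h'.symm
    have hw2 : G.Adj (v ⟨a, by omega⟩) (v ⟨a + 1, h2⟩) := hpath a h2
    have hne : v ⟨a - 1, by omega⟩ ≠ v ⟨a + 1, h2⟩ := by
      intro hcon
      have h' := hinj hcon
      rw [Fin.mk.injEq] at h'
      omega
    have hsub : ({v ⟨a - 1, by omega⟩, v ⟨a + 1, h2⟩} : Finset V)
        ⊆ G.neighborFinset (v ⟨a, by omega⟩) := by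
      intro z hz
      simp only [Finset.mem_insert, Finset.mem_singleton] at hz
      rcases hz with rfl | rfl
      · exact (SimpleGraph.mem_neighborFinset _ _ _).mpr hw1
      · exact (SimpleGraph.mem_neighborFinset _ _ _).mpr hw2
    have heq : ({v ⟨a - 1, by omega⟩, v ⟨a + 1, h2⟩} : Finset V)
        = G.neighborFinset (v ⟨a, by omega⟩) := by
      apply Finset.eq_of_subset_of_card_le hsub
      rw [SimpleGraph.card_neighborFinset_eq_degree, hdeg a (by omega) h1 h2,
        Finset.card_pair hne]
    have hmem : u ∈ G.neighborFinset (v ⟨a, by omega⟩) :=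
      (SimpleGraph.mem_neighborFinset _ _ _).mpr hadj
    rw [← heq] at hmem
    simpa using hmem
  -- walk lemma
  have key : ∀ (x z : ↥W) (p : (G.induce W).Walk x z), z.val = v ⟨0, hl0⟩ →
      ∀ (a : ℕ) (ha : a < l), x.val = v ⟨a, ha⟩ →
      (∀ (k : ℕ) (hk : k < l), k ≤ a → v ⟨k, hk⟩ ∈ W) ∨
      (∀ (k : ℕ) (hk : k < l), a ≤ k → v ⟨k, hk⟩ ∈ W) := by
    intro x z p
    induction p with
    | nil =>
      intro hz a ha hx
      rw [hz] at hx
      left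
      intro k hk hka
      have ha0 : a = 0 := by
        have h' := hinj hx
        rw [Fin.mk.injEq] at h'
        omega
      have hk0 : k = 0 := by omega
      subst hk0
      exact h0
    | @cons x' y' _ hadj q ih =>
      intro hz a ha hx
      specialize ih hz
      by_cases ha0 : a = 0
      · subst ha0
        left
        intro k hk hka
        have hk0 : k = 0 := by omega
        subst hk0
        rw [← hx] at *
        exact x'.2
      · by_cases hal : a = l - 1
        · right
          intro k hk hka
          have hk0 : k = a := by omega
          subst hk0
          rw [← hx]
          exact x'.2
        · have h1 : 0 < a := by omega
          have h2 : a + 1 < l := by omega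
          have hGadj : G.Adj (v ⟨a, ha⟩) y'.val := by
            rw [← hx]
            exact hadj
          rcases hnbr a h1 h2 y'.val hGadj with hy | hy
          · rcases ih (a - 1) (by omega) hy with hL | hR
            · left
              intro k hk hka
              rcases Nat.lt_or_ge k a with h' | h'
              · exact hL k hk (by omega)
              · have hk0 : k = a := by omega
                subst hk0
                rw [← hx]
                exact x'.2
            · right
              intro k hk hka
              exact hR k hk (by omega)
          · rcases ih (a + 1) (by omega) hy with hL | hR
            · left
              intro k hk hka
              exact hL k hk (by omega)
            · right
              intro k hk hka
              rcases Nat.lt_or_ge a k with h' | h'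
              · exact hR k hk (by omega)
              · have hk0 : k = a := by omega
                subst hk0
                rw [← hx]
                exact x'.2
  have hS : ∀ (a : ℕ) (ha : a < l), v ⟨a, ha⟩ ∈ W →
      (∀ (k : ℕ) (hk : k < l), k ≤ a → v ⟨k, hk⟩ ∈ W) ∨
      (∀ (k : ℕ) (hk : k < l), a ≤ k → v ⟨k, hk⟩ ∈ W) := by
    intro a ha hw
    obtain ⟨p⟩ := hconn.preconnected ⟨v ⟨a, ha⟩, hw⟩ ⟨v ⟨0, hl0⟩, h0⟩
    exact key _ _ p rfl a ha rfl
  by_cases hall : ∀ (a : ℕ) (ha : a < l), v ⟨a, ha⟩ ∈ W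
  · refine ⟨l - 1, 1, by omega, le_refl 1, by omega, ?_⟩
    ext x
    simp only [Set.mem_inter_iff, Set.mem_range, Set.mem_image, Set.mem_setOf_eq]
    constructor
    · rintro ⟨hxW, i, rfl⟩
      exact ⟨i, by have := i.isLt; omega, rfl⟩
    · rintro ⟨i, -, rfl⟩
      have := hall i i.isLt
      simp only [Fin.eta] at this
      exact ⟨this, i, rfl⟩
  · push_neg at hall
    obtain ⟨m, hm, hmW⟩ := hall
    set u : ℕ → V := fun n => v ⟨n % l, Nat.mod_lt n hl0⟩ with hu
    have humod : ∀ (n : ℕ) (hn : n < l), u n = v ⟨n, hn⟩ := by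
      intro n hn
      simp only [hu]
      congr 1
      apply Fin.ext
      simp [Nat.mod_eq_of_lt hn]
    have hPj : ∃ n, u n ∉ W := ⟨m, by rw [humod m hm]; exact hmW⟩
    set j := Nat.find hPj with hj
    have hjspec : u j ∉ W := Nat.find_spec hPj
    have hjmin : ∀ i, i < j → u i ∈ W := by
      intro i hi
      have := Nat.find_min hPj hi
      exact not_not.mp this
    have hjl : j < l := lt_of_le_of_lt (Nat.find_le (by rw [humod m hm]; exact hmW)) hm
    have hj1 : 1 ≤ j := by
      rcases Nat.eq_zero_or_pos j with h' | h'
      · exfalso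
        apply hjspec
        rw [h', humod 0 hl0]
        exact h0
      · exact h'
    have hPj' : ∃ n, u (l - 1 - n) ∉ W :=
      ⟨l - 1 - j, by rw [show l - 1 - (l - 1 - j) = j by omega]; exact hjspec⟩
    set j' := Nat.find hPj' with hj'
    have hj'spec : u (l - 1 - j') ∉ W := Nat.find_spec hPj'
    have hj'min : ∀ i, i < j' → u (l - 1 - i) ∈ W := by
      intro i hi
      have := Nat.find_min hPj' hi
      exact not_not.mp this
    have hj'le : j' ≤ l - 1 - j :=
      Nat.find_le (by rw [show l - 1 - (l - 1 - j) = j by omega]; exact hjspec)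
    have hj'1 : 1 ≤ j' := by
      rcases Nat.eq_zero_or_pos j' with h' | h'
      · exfalso
        apply hj'spec
        rw [h', Nat.sub_zero, humod (l - 1) (by omega)]
        exact hlast
      · exact h'
    refine ⟨j, j', hj1, hj'1, by omega, ?_⟩
    ext x
    simp only [Set.mem_inter_iff, Set.mem_range, Set.mem_image, Set.mem_setOf_eq]
    constructor
    · rintro ⟨hxW, i, rfl⟩
      refine ⟨i, ?_, rfl⟩
      have hiv : v ⟨(i : ℕ), i.isLt⟩ ∈ W := by
        rw [Fin.eta]
        exact hxW
      rcases hS i i.isLt hiv with hL | hR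
      · left
        by_contra hc
        push_neg at hc
        apply hjspec
        rw [humod j hjl]
        exact hL j hjl hc
      · right
        by_contra hc
        push_neg at hc
        apply hj'spec
        rw [humod (l - 1 - j') (by omega)]
        exact hR (l - 1 - j') (by omega) (by omega)
    · rintro ⟨i, hi, rfl⟩
      refine ⟨?_, i, rfl⟩
      rcases hi with hi | hi
      · have h' := hjmin i hi
        rw [humod i i.isLt] at h'
        rw [Fin.eta] at h'
        exact h'
      · have hlt : l - 1 - (i : ℕ) < j' := by
          have := i.isLt
          omega
        have h' := hj'min _ hlt
        rw [humod _ (by omega)] at h'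
        have he : (⟨l - 1 - (l - 1 - (i : ℕ)), by omega⟩ : Fin l) = i := by
          apply Fin.ext
          have := i.isLt
          simp
          omega
        rw [he] at h'
        exact h'
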